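/- Let α be a nonnegative random variable with finite expectation and continuous CDF F, let n ≥ 2, T ≥ 0, c ≥ 0, k_n = (n+1)T + c, r_L^n = α_L − k_n, r_H^n = α_H − k_n, and assume r_H^n > 0. Define the supplier's expected payoff U_n(r) = (n/(n+1))·r·E[(α − k_n − r)⁺] for r ≥ 0. Then: (A) if r* maximizes U_n over [0,∞) with U_n(r*) > 0, then r* ∈ (0, r_H^n) and r* = m(r* + k_n); (B) if F is DMRL, then the equation r = m(r + k_n) has a unique solution r* in (0, r_H^n), this r* is the unique global maximizer of U_n over [0,∞), and if moreover E(α) − α_L ≤ α_L − (n+1)T − c (= r_L^n) then r* = (1/2)(E(α) − (n+1)T − c), while if E(α) − α_L > r_L^n then r* ∈ ((r_L^n)⁺, r_H^n). -/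

import Mathlib

/-!
Write `s(t) = E(α - t)⁺` for the stop-loss transform, so that `m = s / P(α > ·)`. For an
atomless law `s' = -P(α > ·)`, hence `U'(r) = C · P(α > r + k) · (m(r + k) - r)` whenever
`r + k < α_H`. A maximiser with positive value is interior and critical, which gives (A).
Under DMRL, `r ↦ m(r + k) - r` is strictly decreasing, positive at `0` and nonpositive far out,
so it has exactly one zero `r*`; the sign of `U'` makes `U` rise before `r*` and fall after it,
and `U = 0` once `r + k ≥ α_H`. Below `α_L` all the mass lies to the right, so
`m(t) = E(α) - t` there, which gives the closed form and the lower bound.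
-/

open MeasureTheory Set

noncomputable def cdfR (μ : Measure ℝ) (t : ℝ) : ℝ := (μ (Iic t)).toReal

/-- The mean residual lifetime function `m(t) = E[α − t ∣ α > t]` (with value `0` when
`P(α > t) = 0`, using the junk-value convention `x / 0 = 0`). -/
noncomputable def mrl (μ : Measure ℝ) (t : ℝ) : ℝ :=
  (∫ x, max (x - t) 0 ∂μ) / (μ (Ioi t)).toReal

open Filter Topology ProbabilityTheory

namespace MeanResidualLife

noncomputable def stopLoss (μ : Measure ℝ) (t : ℝ) : ℝ := ∫ x, max (x - t) 0 ∂μ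

lemma stopLoss_nonneg (μ : Measure ℝ) (t : ℝ) : 0 ≤ stopLoss μ t :=
  integral_nonneg fun _ => le_max_right _ _

lemma mrl_eq_stopLoss_div (μ : Measure ℝ) (t : ℝ) :
    mrl μ t = stopLoss μ t / μ.real (Ioi t) :=
  rfl

lemma stopLoss_eq_zero {μ : Measure ℝ} {t : ℝ}
    (h : essSup (fun x : ℝ => (x : EReal)) μ ≤ t) : stopLoss μ t = 0 := by
  refine integral_eq_zero_of_ae ?_
  filter_upwards [ae_le_essSup (f := fun x : ℝ => (x : EReal)) (μ := μ)] with x hx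
  exact max_eq_right (sub_nonpos.2 (EReal.coe_le_coe_iff.1 (hx.trans h)))

lemma ae_lt_of_le_essInf {μ : Measure ℝ} [NullSingletonClass μ] {αL t : ℝ}
    (hαL : essInf (fun x : ℝ => (x : EReal)) μ = αL) (h : t ≤ αL) :
    ∀ᵐ x ∂μ, t < x := by
  filter_upwards [ae_essInf_le (f := fun x : ℝ => (x : EReal)) (μ := μ),
    measure_eq_zero_iff_ae_notMem.1 (measure_singleton t)] with x hx hxt
  rw [hαL] at hx
  exact lt_of_le_of_ne (h.trans (EReal.coe_le_coe_iff.1 hx)) (Ne.symm hxt)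

section FiniteMeasure

variable {μ : Measure ℝ} [IsFiniteMeasure μ]

lemma integrable_max_sub_const (hint : Integrable id μ) (t : ℝ) :
    Integrable (fun x => max (x - t) 0) μ :=
  (hint.sub (integrable_const t)).pos_part

lemma stopLoss_sub_stopLoss_mem_Icc (hint : Integrable id μ) {s u : ℝ} (h : s ≤ u) :
    stopLoss μ s - stopLoss μ u ∈
      Icc ((u - s) * μ.real (Ioi u)) ((u - s) * μ.real (Ioi s)) := by
  have hind : ∀ v, (u - s) * μ.real (Ioi v) =
      ∫ x, (Ioi v).indicator (fun _ => u - s) x ∂μ := by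
    intro v
    rw [integral_indicator_const _ measurableSet_Ioi, smul_eq_mul, mul_comm]
  have hint_ind : ∀ v, Integrable ((Ioi v).indicator fun _ => u - s) μ := fun v =>
    (integrable_const _).indicator measurableSet_Ioi
  have hdiff := (integrable_max_sub_const hint s).sub (integrable_max_sub_const hint u)
  rw [stopLoss, stopLoss, ← integral_sub (integrable_max_sub_const hint s)
    (integrable_max_sub_const hint u), hind, hind]
  refine ⟨integral_mono (hint_ind u) hdiff fun x => ?_,
    integral_mono hdiff (hint_ind s) fun x => ?_⟩ <;>
  · simp only [indicator_apply, mem_Ioi]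
    split_ifs <;> grind

lemma slope_stopLoss_mem_Icc (hint : Integrable id μ) {s u : ℝ} (h : s < u) :
    slope (stopLoss μ) s u ∈ Icc (-μ.real (Ioi s)) (-μ.real (Ioi u)) := by
  obtain ⟨h₁, h₂⟩ := stopLoss_sub_stopLoss_mem_Icc hint h.le
  have hpos : 0 < u - s := sub_pos.2 h
  rw [slope_def_field]
  constructor
  · rw [le_div_iff₀ hpos]; linarith
  · rw [div_le_iff₀ hpos]; linarith

lemma measureReal_Ioi_pos {t : ℝ} (h : (t : EReal) < essSup (fun x : ℝ => (x : EReal)) μ) :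
    0 < μ.real (Ioi t) := by
  refine measureReal_nonneg.lt_of_ne' fun h0 => h.not_ge (essSup_le_of_ae_le _ ?_)
  rw [measureReal_eq_zero_iff, measure_eq_zero_iff_ae_notMem] at h0
  filter_upwards [h0] with x hx
  exact EReal.coe_le_coe_iff.2 (not_lt.1 hx)

lemma stopLoss_pos (hint : Integrable id μ) {t : ℝ}
    (h : (t : EReal) < essSup (fun x : ℝ => (x : EReal)) μ) : 0 < stopLoss μ t := by
  obtain ⟨y, hty, hy⟩ := EReal.lt_iff_exists_real_btwn.1 h
  have hty : t < y := EReal.coe_lt_coe_iff.1 hty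
  obtain ⟨h₁, -⟩ := stopLoss_sub_stopLoss_mem_Icc hint hty.le
  nlinarith [measureReal_Ioi_pos hy, stopLoss_nonneg (μ := μ) y]

lemma stopLoss_le_mul_measureReal_Ioi (hint : Integrable id μ) {H : ℝ}
    (hH : ∀ᵐ x ∂μ, x ≤ H) (t : ℝ) : stopLoss μ t ≤ (H - t) * μ.real (Ioi t) := by
  rw [mul_comm, ← smul_eq_mul, ← integral_indicator_const _ measurableSet_Ioi]
  refine integral_mono_ae (integrable_max_sub_const hint t)
    ((integrable_const _).indicator measurableSet_Ioi) ?_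
  filter_upwards [hH] with x hx
  simp only [indicator_apply, mem_Ioi]
  split_ifs <;> grind

lemma mrl_pos (hint : Integrable id μ) {t : ℝ}
    (h : (t : EReal) < essSup (fun x : ℝ => (x : EReal)) μ) : 0 < mrl μ t :=
  div_pos (stopLoss_pos hint h) (measureReal_Ioi_pos h)

lemma mrl_le_sub_of_ae_le (hint : Integrable id μ) {H t : ℝ} (hH : ∀ᵐ x ∂μ, x ≤ H)
    (h : (t : EReal) < essSup (fun x : ℝ => (x : EReal)) μ) : mrl μ t ≤ H - t := by
  rw [mrl_eq_stopLoss_div, div_le_iff₀ (measureReal_Ioi_pos h)]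
  exact stopLoss_le_mul_measureReal_Ioi hint hH t

lemma exists_pos_mrl_add_le (hint : Integrable id μ) (hm : Antitone (mrl μ)) {k : ℝ}
    (hk : (k : EReal) < essSup (fun x : ℝ => (x : EReal)) μ) :
    ∃ b, 0 < b ∧ ((b + k : ℝ) : EReal) < essSup (fun x : ℝ => (x : EReal)) μ ∧
      mrl μ (b + k) ≤ b := by
  have hmk := mrl_pos hint hk
  have hle := ae_le_essSup (f := fun x : ℝ => (x : EReal)) (μ := μ)
  generalize hS : essSup (fun x : ℝ => (x : EReal)) μ = S at hk hle
  induction S using EReal.rec with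
  | bot => exact absurd hk not_lt_bot
  | coe H =>
    have hkH : k < H := EReal.coe_lt_coe_iff.1 hk
    have hbS : (((H - k) / 2 + k : ℝ) : EReal) < H := EReal.coe_lt_coe_iff.2 (by linarith)
    refine ⟨(H - k) / 2, by linarith, hbS, ?_⟩
    have := mrl_le_sub_of_ae_le hint (hle.mono fun x hx => EReal.coe_le_coe_iff.1 hx)
      (hS ▸ hbS)
    linarith
  | top =>
    refine ⟨mrl μ k + 1, by linarith, EReal.coe_lt_top _, ?_⟩
    linarith [hm (by linarith : k ≤ mrl μ k + 1 + k)]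

end FiniteMeasure

section ProbabilityMeasure

variable {μ : Measure ℝ} [IsProbabilityMeasure μ] [NullSingletonClass μ]

lemma continuous_cdf : Continuous (cdf μ) := by
  refine continuous_iff_continuousAt.2 fun a => ?_
  rw [(monotone_cdf μ).continuousAt_iff_leftLim_eq_rightLim, StieltjesFunction.rightLim_eq]
  have hjump : (cdf μ).measure {a} = 0 := by rw [measure_cdf]; exact measure_singleton a
  rw [StieltjesFunction.measure_singleton, ENNReal.ofReal_eq_zero] at hjump
  linarith [(monotone_cdf μ).leftLim_le (le_refl a)]

lemma continuous_measureReal_Ioi : Continuous fun t => μ.real (Ioi t) := by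
  refine ((continuous_const (y := (1 : ℝ))).sub (continuous_cdf (μ := μ))).congr fun t => ?_
  rw [Pi.sub_apply, cdf_eq_real, ← compl_Iic, probReal_compl_eq_one_sub measurableSet_Iic]

lemma hasDerivAt_stopLoss (hint : Integrable id μ) (t : ℝ) :
    HasDerivAt (stopLoss μ) (-μ.real (Ioi t)) t := by
  rw [hasDerivAt_iff_tendsto_slope, tendsto_iff_norm_sub_tendsto_zero]
  have hG : Tendsto (fun y => |-μ.real (Ioi y) - -μ.real (Ioi t)|) (𝓝[≠] t) (𝓝 0) := by
    have := ((continuous_measureReal_Ioi (μ := μ)).neg.tendsto t).sub_const (-μ.real (Ioi t))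
    simpa using (this.abs).mono_left nhdsWithin_le_nhds
  refine squeeze_zero' (Eventually.of_forall fun _ => norm_nonneg _) ?_ hG
  filter_upwards [self_mem_nhdsWithin] with y hy
  have hmem : slope (stopLoss μ) t y ∈ uIcc (-μ.real (Ioi t)) (-μ.real (Ioi y)) := by
    rcases lt_or_gt_of_ne hy with h | h
    · rw [slope_comm, uIcc_comm]; exact Icc_subset_uIcc (slope_stopLoss_mem_Icc hint h)
    · exact Icc_subset_uIcc (slope_stopLoss_mem_Icc hint h)
  exact abs_sub_left_of_mem_uIcc hmem

lemma continuousAt_mrl (hint : Integrable id μ) {t : ℝ}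
    (h : (t : EReal) < essSup (fun x : ℝ => (x : EReal)) μ) : ContinuousAt (mrl μ) t :=
  (hasDerivAt_stopLoss hint t).continuousAt.div continuous_measureReal_Ioi.continuousAt
    (measureReal_Ioi_pos h).ne'

lemma mrl_of_le_essInf (hint : Integrable id μ) {αL t : ℝ}
    (hαL : essInf (fun x : ℝ => (x : EReal)) μ = αL) (h : t ≤ αL) :
    mrl μ t = (∫ x, x ∂μ) - t := by
  have hlt := ae_lt_of_le_essInf hαL h
  have hIic : μ.real (Iic t) = 0 := by
    rw [measureReal_eq_zero_iff, measure_eq_zero_iff_ae_notMem]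
    filter_upwards [hlt] with x hx using not_le.2 hx
  have hstop : stopLoss μ t = (∫ x, x ∂μ) - t := by
    rw [stopLoss, integral_congr_ae (hlt.mono fun x hx => max_eq_left (sub_nonneg.2 hx.le)),
      integral_sub (f := fun x => x) hint (integrable_const t), integral_const, probReal_univ,
      one_smul]
  rw [mrl_eq_stopLoss_div, hstop, ← compl_Iic, probReal_compl_eq_one_sub measurableSet_Iic, hIic,
    sub_zero, div_one]

end ProbabilityMeasure

lemma strictAnti_mrl_sub {μ : Measure ℝ} (hm : Antitone (mrl μ)) (k : ℝ) :
    StrictAnti fun r => mrl μ (r + k) - r := fun a b hab => by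
  show mrl μ (b + k) - b < mrl μ (a + k) - a
  linarith [hm (by linarith : a + k ≤ b + k)]

lemma coe_lt_sub_coe_iff {S : EReal} {r k : ℝ} :
    (r : EReal) < S - k ↔ ((r + k : ℝ) : EReal) < S := by
  rw [EReal.lt_sub_iff_add_lt (Or.inl (EReal.coe_ne_bot k)) (Or.inl (EReal.coe_ne_top k)),
    EReal.coe_add]

noncomputable def payoff (μ : Measure ℝ) (C k r : ℝ) : ℝ := C * r * stopLoss μ (r + k)

section Payoff

variable {μ : Measure ℝ} [IsProbabilityMeasure μ] [NullSingletonClass μ] {C k : ℝ}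

lemma hasDerivAt_payoff (hint : Integrable id μ) (C k r : ℝ) :
    HasDerivAt (payoff μ C k) (C * (stopLoss μ (r + k) - r * μ.real (Ioi (r + k)))) r := by
  have hstop := (hasDerivAt_stopLoss hint (r + k)).comp_add_const r k
  exact (((hasDerivAt_id' r).const_mul C).fun_mul hstop).congr_deriv (by ring)

lemma hasDerivAt_payoff_of_lt (hint : Integrable id μ) {r : ℝ}
    (h : ((r + k : ℝ) : EReal) < essSup (fun x : ℝ => (x : EReal)) μ) :
    HasDerivAt (payoff μ C k) (C * μ.real (Ioi (r + k)) * (mrl μ (r + k) - r)) r := by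
  refine (hasDerivAt_payoff hint C k r).congr_deriv ?_
  rw [mrl_eq_stopLoss_div]
  field_simp [(measureReal_Ioi_pos h).ne']

theorem eq_mrl_of_isMaxOn (hint : Integrable id μ) (hC : 0 < C) {r : ℝ} (hr : 0 ≤ r)
    (hmax : IsMaxOn (payoff μ C k) (Ici 0) r) (hpos : 0 < payoff μ C k r) :
    0 < r ∧ ((r + k : ℝ) : EReal) < essSup (fun x : ℝ => (x : EReal)) μ ∧
      r = mrl μ (r + k) := by
  have hr₀ : 0 < r := hr.lt_of_ne <| by rintro rfl; simp [payoff] at hpos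
  have hS : ((r + k : ℝ) : EReal) < essSup (fun x : ℝ => (x : EReal)) μ := by
    by_contra h
    rw [payoff, stopLoss_eq_zero (not_lt.1 h), mul_zero] at hpos
    exact hpos.false
  refine ⟨hr₀, hS, ?_⟩
  have hcrit := (hmax.isLocalMax (Ici_mem_nhds hr₀)).hasDerivAt_eq_zero
    (hasDerivAt_payoff_of_lt hint hS)
  rcases mul_eq_zero.1 hcrit with h | h
  · exact absurd h (mul_pos hC (measureReal_Ioi_pos hS)).ne'
  · linarith

theorem exists_eq_mrl (hint : Integrable id μ) (hm : Antitone (mrl μ))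
    (hk : (k : EReal) < essSup (fun x : ℝ => (x : EReal)) μ) :
    ∃ r, 0 < r ∧ ((r + k : ℝ) : EReal) < essSup (fun x : ℝ => (x : EReal)) μ ∧
      r = mrl μ (r + k) := by
  obtain ⟨b, hb, hbS, hmb⟩ := exists_pos_mrl_add_le hint hm hk
  have hS : ∀ r ≤ b, ((r + k : ℝ) : EReal) < essSup (fun x : ℝ => (x : EReal)) μ :=
    fun r hr => lt_of_le_of_lt (EReal.coe_le_coe_iff.2 (by linarith)) hbS
  have hcont : ContinuousOn (fun r => mrl μ (r + k) - r) (Icc 0 b) := fun r hr => by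
    have hmrl : ContinuousAt (fun r => mrl μ (r + k)) r :=
      (continuousAt_mrl hint (hS r hr.2)).comp (f := (· + k))
        (continuous_add_const k).continuousAt
    exact (hmrl.sub continuousAt_id).continuousWithinAt
  obtain ⟨r, hr, hroot⟩ := intermediate_value_Icc' hb.le hcont
    ⟨sub_nonpos.2 hmb, by simpa using (mrl_pos hint hk).le⟩
  have hfix : r = mrl μ (r + k) := (sub_eq_zero.1 hroot).symm
  exact ⟨r, hfix ▸ mrl_pos hint (hS r hr.2), hS r hr.2, hfix⟩

theorem payoff_lt_of_eq_mrl (hint : Integrable id μ) (hm : Antitone (mrl μ)) (hC : 0 < C)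
    {r₀ : ℝ} (hfix : r₀ = mrl μ (r₀ + k))
    (hS : ((r₀ + k : ℝ) : EReal) < essSup (fun x : ℝ => (x : EReal)) μ) {r : ℝ}
    (hr : r ≠ r₀) :
    payoff μ C k r < payoff μ C k r₀ := by
  have hφ := strictAnti_mrl_sub hm k
  have hφ₀ : mrl μ (r₀ + k) - r₀ = 0 := by rw [← hfix, sub_self]
  have hcont : Continuous (payoff μ C k) :=
    continuous_iff_continuousAt.2 fun x => (hasDerivAt_payoff hint C k x).continuousAt
  have hderiv : ∀ {x}, ((x + k : ℝ) : EReal) < essSup (fun x : ℝ => (x : EReal)) μ →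
      deriv (payoff μ C k) x = C * μ.real (Ioi (x + k)) * (mrl μ (x + k) - x) :=
    fun hx => (hasDerivAt_payoff_of_lt hint hx).deriv
  rcases hr.lt_or_gt with hlt | hgt
  · refine strictMonoOn_of_deriv_pos (convex_Icc r r₀) hcont.continuousOn (fun x hx => ?_)
      ⟨le_rfl, hlt.le⟩ ⟨hlt.le, le_rfl⟩ hlt
    rw [interior_Icc] at hx
    have hxS := lt_of_le_of_lt (EReal.coe_le_coe_iff.2 (by linarith [hx.2] : x + k ≤ r₀ + k)) hS
    rw [hderiv hxS]
    exact mul_pos (mul_pos hC (measureReal_Ioi_pos hxS)) (by linarith [hφ hx.2])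
  by_cases hrS : ((r + k : ℝ) : EReal) < essSup (fun x : ℝ => (x : EReal)) μ
  · refine strictAntiOn_of_deriv_neg (convex_Icc r₀ r) hcont.continuousOn (fun x hx => ?_)
      ⟨le_rfl, hgt.le⟩ ⟨hgt.le, le_rfl⟩ hgt
    rw [interior_Icc] at hx
    have hxS := lt_of_le_of_lt (EReal.coe_le_coe_iff.2 (by linarith [hx.2] : x + k ≤ r + k)) hrS
    rw [hderiv hxS]
    exact mul_neg_of_pos_of_neg (mul_pos hC (measureReal_Ioi_pos hxS)) (by linarith [hφ hx.1])
  · rw [payoff, stopLoss_eq_zero (not_lt.1 hrS), mul_zero]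
    exact mul_pos (mul_pos hC (hfix ▸ mrl_pos hint hS)) (stopLoss_pos hint hS)

end Payoff

lemma half_mean_sub_eq_mrl {μ : Measure ℝ} [IsProbabilityMeasure μ] [NullSingletonClass μ]
    (hint : Integrable id μ) {αL k : ℝ} (hαL : essInf (fun x : ℝ => (x : EReal)) μ = αL)
    (h : (∫ x, x ∂μ) - αL ≤ αL - k) :
    1 / 2 * ((∫ x, x ∂μ) - k) = mrl μ (1 / 2 * ((∫ x, x ∂μ) - k) + k) := by
  rw [mrl_of_le_essInf hint hαL (by linarith)]
  ring

lemma max_sub_lt_of_eq_mrl {μ : Measure ℝ} [IsProbabilityMeasure μ] [NullSingletonClass μ]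
    (hint : Integrable id μ) (hm : Antitone (mrl μ)) {αL k r₀ : ℝ}
    (hαL : essInf (fun x : ℝ => (x : EReal)) μ = αL)
    (hk : (k : EReal) < essSup (fun x : ℝ => (x : EReal)) μ) (hfix : r₀ = mrl μ (r₀ + k))
    (h : αL - k < (∫ x, x ∂μ) - αL) : max (αL - k) 0 < r₀ := by
  refine (strictAnti_mrl_sub hm k).lt_iff_gt.1 ?_
  show mrl μ (r₀ + k) - r₀ < mrl μ (max (αL - k) 0 + k) - max (αL - k) 0
  rw [← hfix, sub_self]
  rcases le_total αL k with hαk | hαk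
  · simpa [max_eq_right (sub_nonpos.2 hαk)] using mrl_pos hint hk
  · rw [max_eq_left (sub_nonneg.2 hαk), sub_add_cancel, mrl_of_le_essInf hint hαL le_rfl]
    linarith

end MeanResidualLife

open MeanResidualLife

theorem stmt19_general (μ : Measure ℝ) [IsProbabilityMeasure μ]
    (hint : Integrable id μ) (hcont : ∀ t : ℝ, μ {t} = 0)
    (n : ℕ) (hn : 2 ≤ n)
    (k : ℝ)
    (αL : ℝ) (hαL : essInf (fun x : ℝ => (x : EReal)) μ = (αL : EReal))
    (rH : EReal) (hrH : rH = essSup (fun x : ℝ => (x : EReal)) μ - (k : EReal))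
    (hrHpos : 0 < rH)
    (U : ℝ → ℝ)
    (hU : ∀ r : ℝ, U r = ((n : ℝ)/(n + 1 : ℝ)) * r * ∫ x, max (x - k - r) 0 ∂μ) :
    (∀ rstar : ℝ, 0 ≤ rstar → (∀ r : ℝ, 0 ≤ r → U r ≤ U rstar) → 0 < U rstar →
      (0 < rstar ∧ (rstar : EReal) < rH) ∧ rstar = mrl μ (rstar + k)) ∧
    (Antitone (mrl μ) →
      ∃ rstar : ℝ, (0 < rstar ∧ (rstar : EReal) < rH) ∧ rstar = mrl μ (rstar + k) ∧
        (∀ r : ℝ, 0 < r → (r : EReal) < rH → r = mrl μ (r + k) → r = rstar) ∧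
        (∀ r : ℝ, 0 ≤ r → r ≠ rstar → U r < U rstar) ∧
        ((∫ x, x ∂μ) - αL ≤ αL - k → rstar = (1/2) * ((∫ x, x ∂μ) - k)) ∧
        (αL - k < (∫ x, x ∂μ) - αL → max (αL - k) 0 < rstar)) := by
  have : NullSingletonClass μ := ⟨hcont⟩
  have hC : (0 : ℝ) < n / (n + 1) := by
    have : (0 : ℝ) < n := by exact_mod_cast (by omega : 0 < n)
    positivity
  obtain rfl : U = payoff μ (n / (n + 1)) k := funext fun r => by
    rw [hU, payoff, stopLoss]
    simp_rw [sub_sub, add_comm k r]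
  subst hrH
  have hk : ((0 + k : ℝ) : EReal) < essSup (fun x : ℝ => (x : EReal)) μ :=
    coe_lt_sub_coe_iff.1 (by exact_mod_cast hrHpos)
  rw [zero_add] at hk
  refine ⟨fun r hr hmax hpos => ?_, fun hm => ?_⟩
  · obtain ⟨hr₀, hrS, hfix⟩ := eq_mrl_of_isMaxOn hint hC hr (isMaxOn_iff.2 hmax) hpos
    exact ⟨⟨hr₀, coe_lt_sub_coe_iff.2 hrS⟩, hfix⟩
  have hφ := strictAnti_mrl_sub hm k
  obtain ⟨r₀, hr₀, hS, hfix⟩ := exists_eq_mrl hint hm hk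
  refine ⟨r₀, ⟨hr₀, coe_lt_sub_coe_iff.2 hS⟩, hfix,
    fun r _ _ hr => hφ.injective (by simp only [← hr, ← hfix, sub_self]),
    fun r _ hr => payoff_lt_of_eq_mrl hint hm hC hfix hS hr,
    fun h => hφ.injective <| by
      simp only [← hfix, ← half_mean_sub_eq_mrl hint hαL h, sub_self],
    max_sub_lt_of_eq_mrl hint hm hαL hk hfix⟩

/-- The `n`-retailer generalization. With `k_n = (n+1)T + c`,
`r_H^n = α_H − k_n > 0` and `U_n(r) = (n/(n+1))·r·E[(α − k_n − r)⁺]`: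
(A) any maximizer `r*` of `U_n` over `[0,∞)` with `U_n(r*) > 0` lies in `(0, r_H^n)` and
satisfies `r* = m(r* + k_n)`; (B) if `F` is DMRL, then `r = m(r + k_n)` has a unique
solution `r*` in `(0, r_H^n)`, which is the unique global maximizer of `U_n`, equals
`(1/2)(E(α) − k_n)` when `E(α) − α_L ≤ α_L − k_n`, and lies in `((r_L^n)⁺, r_H^n)` when
`E(α) − α_L > α_L − k_n`. -/
theorem stmt19 (μ : Measure ℝ) [IsProbabilityMeasure μ]
    (hnonneg : μ (Iio 0) = 0) (hint : Integrable id μ) (hcont : ∀ t : ℝ, μ {t} = 0)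
    (n : ℕ) (hn : 2 ≤ n) (T c : ℝ) (hT : 0 ≤ T) (hc : 0 ≤ c)
    (k : ℝ) (hk : k = (n + 1 : ℝ)*T + c)
    (αL : ℝ) (hαL : essInf (fun x : ℝ => (x : EReal)) μ = (αL : EReal))
    (rH : EReal) (hrH : rH = essSup (fun x : ℝ => (x : EReal)) μ - (k : EReal))
    (hrHpos : 0 < rH)
    (U : ℝ → ℝ)
    (hU : ∀ r : ℝ, U r = ((n : ℝ)/(n + 1 : ℝ)) * r * ∫ x, max (x - k - r) 0 ∂μ) :
    (∀ rstar : ℝ, 0 ≤ rstar → (∀ r : ℝ, 0 ≤ r → U r ≤ U rstar) → 0 < U rstar →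
      (0 < rstar ∧ (rstar : EReal) < rH) ∧ rstar = mrl μ (rstar + k)) ∧
    (Antitone (mrl μ) →
      ∃ rstar : ℝ, (0 < rstar ∧ (rstar : EReal) < rH) ∧ rstar = mrl μ (rstar + k) ∧
        (∀ r : ℝ, 0 < r → (r : EReal) < rH → r = mrl μ (r + k) → r = rstar) ∧
        (∀ r : ℝ, 0 ≤ r → r ≠ rstar → U r < U rstar) ∧
        ((∫ x, x ∂μ) - αL ≤ αL - k → rstar = (1/2) * ((∫ x, x ∂μ) - k)) ∧
        (αL - k < (∫ x, x ∂μ) - αL → max (αL - k) 0 < rstar)) :=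
  stmt19_general μ hint hcont n hn k αL hαL rH hrH hrHpos U hU
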